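/- In K[x_1,…,x_6] with K algebraically closed, the ideal I_6 = (x_1x_3, x_1x_4, x_1x_5, x_2x_4, x_2x_5, x_2x_6, x_3x_5, x_3x_6, x_4x_6) satisfies √I_6 = I_6 = √(D, q_1, q_2, q_3), where D = x_1^2x_3 − x_1x_2x_4 − x_2x_3^2x_5, q_1 = x_1x_4 + x_3x_5^2 + x_2x_6, q_2 = x_2x_4 + x_1x_5 + x_4x_6, q_3 = x_2x_5 + x_3x_6. -/

import Mathlib

open MvPolynomial

section C6Aux

variable {K : Type*} [Field K]

private lemma C6_mask [Infinite K] (C : Finset (Fin 6)) (f : MvPolynomial (Fin 6) K)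
    (hf : ∀ y : Fin 6 → K, (∀ i ∈ C, y i = 0) → eval y f = 0) :
    ∀ m ∈ f.support, ∃ i ∈ C, (m : Fin 6 →₀ ℕ) i ≠ 0 := by
  intro m hm
  by_contra hcon
  push_neg at hcon
  set g : Fin 6 → MvPolynomial (Fin 6) K := fun i => if i ∈ C then 0 else X i with hg
  have hphi : bind₁ g f = 0 := by
    apply MvPolynomial.funext
    intro y
    have h1 : eval y (bind₁ g f) = eval (fun i => eval y (g i)) f :=
      eval₂Hom_bind₁ (RingHom.id K) y g f
    have h2 : (fun i => eval y (g i)) = fun i => if i ∈ C then 0 else y i := by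
      funext i; by_cases hi : i ∈ C <;> simp [hg, hi]
    rw [h1, h2, hf _ (fun i hi => by simp [hi]), map_zero]
  have hcf : coeff m (bind₁ g f) = coeff m f := by
    have h1 : coeff m (bind₁ g f) =
        ∑ d ∈ f.support, coeff m (bind₁ g (monomial d (coeff d f))) := by
      conv_lhs => rw [f.as_sum]
      rw [map_sum, coeff_sum]
    have h2 : ∀ d ∈ f.support,
        coeff m (bind₁ g (monomial d (coeff d f))) = coeff m (monomial d (coeff d f)) := by
      intro d _
      by_cases hd : ∀ i ∈ C, d i = 0
      · congr 1
        rw [bind₁_monomial, monomial_eq]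
        congr 1
        rw [Finsupp.prod]
        refine Finset.prod_congr rfl fun i hi => ?_
        have : i ∉ C := fun h => Finsupp.mem_support_iff.mp hi (hd i h)
        simp [hg, this]
      · push_neg at hd
        obtain ⟨i, hiC, hdi⟩ := hd
        rw [bind₁_monomial]
        have hz : (∏ j ∈ d.support, g j ^ d j) = 0 :=
          Finset.prod_eq_zero (Finsupp.mem_support_iff.mpr hdi)
            (by simp [hg, hiC, pow_eq_zero_iff hdi])
        rw [hz, mul_zero, coeff_zero, coeff_monomial, if_neg]
        intro h
        exact hdi (h ▸ hcon i hiC)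
    rw [Finset.sum_congr rfl h2, ← coeff_sum, ← f.as_sum] at h1
    exact h1
  rw [hphi, coeff_zero] at hcf
  exact mem_support_iff.mp hm hcf.symm

private lemma C6_comb (s : Fin 6 → Bool)
    (h : ∀ j : Fin 6, ∃ i ∈ ({j, j + 1} : Finset (Fin 6))ᶜ, s i = true) :
    (s 0 ∧ s 2) ∨ (s 0 ∧ s 3) ∨ (s 0 ∧ s 4) ∨ (s 1 ∧ s 3) ∨ (s 1 ∧ s 4) ∨
    (s 1 ∧ s 5) ∨ (s 2 ∧ s 4) ∨ (s 2 ∧ s 5) ∨ (s 3 ∧ s 5) := by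
  revert h; revert s; decide

private lemma C6_mono_mem (Iid : Ideal (MvPolynomial (Fin 6) K)) (a b : Fin 6) (hab : a ≠ b)
    (hX : X a * X b ∈ Iid) (m : Fin 6 →₀ ℕ) (ha : m a ≠ 0) (hb : m b ≠ 0) (c : K) :
    monomial m c ∈ Iid := by
  have he : (Finsupp.single a 1 + Finsupp.single b 1 : Fin 6 →₀ ℕ) ≤ m := by
    rw [Finsupp.le_iff]
    intro i _
    rw [Finsupp.add_apply, Finsupp.single_apply, Finsupp.single_apply]
    rcases eq_or_ne a i with rfl | hai
    · rw [if_pos rfl, if_neg (by exact fun h => hab h.symm), add_zero]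
      omega
    · rw [if_neg hai, zero_add]
      rcases eq_or_ne b i with rfl | hbi
      · rw [if_pos rfl]; omega
      · rw [if_neg hbi]; omega
  have hXe : (X a * X b : MvPolynomial (Fin 6) K) =
      monomial (Finsupp.single a 1 + Finsupp.single b 1) 1 := by
    rw [X, X, monomial_mul, mul_one]
  have hm : monomial m c =
      monomial (m - (Finsupp.single a 1 + Finsupp.single b 1)) c * (X a * X b) := by
    rw [hXe, monomial_mul, mul_one, tsub_add_cancel_of_le he]
  rw [hm]
  exact Ideal.mul_mem_left _ _ hX

end C6Aux

set_option maxHeartbeats 2000000 in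
/-- In `K[x_1,…,x_6]` (here `x_k = X (k-1)`), the Stanley–Reisner ideal `I₆` of the
6-cycle satisfies `√I₆ = I₆ = √(D, q₁, q₂, q₃)`, where
`D = x₁²x₃ − x₁x₂x₄ − x₂x₃²x₅`, `q₁ = x₁x₄ + x₃x₅² + x₂x₆`,
`q₂ = x₂x₄ + x₁x₅ + x₄x₆`, `q₃ = x₂x₅ + x₃x₆`. -/
theorem C6_radical_eq {K : Type*} [Field K] [IsAlgClosed K] :
    (Ideal.span {X 0 * X 2, X 0 * X 3, X 0 * X 4, X 1 * X 3, X 1 * X 4, X 1 * X 5,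
        X 2 * X 4, X 2 * X 5, X 3 * X 5} : Ideal (MvPolynomial (Fin 6) K)).radical =
      Ideal.span {X 0 * X 2, X 0 * X 3, X 0 * X 4, X 1 * X 3, X 1 * X 4, X 1 * X 5,
        X 2 * X 4, X 2 * X 5, X 3 * X 5} ∧
    (Ideal.span {X 0 * X 2, X 0 * X 3, X 0 * X 4, X 1 * X 3, X 1 * X 4, X 1 * X 5,
        X 2 * X 4, X 2 * X 5, X 3 * X 5} : Ideal (MvPolynomial (Fin 6) K)) =
      (Ideal.span
        { X 0 ^ 2 * X 2 - X 0 * X 1 * X 3 - X 1 * X 2 ^ 2 * X 4,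
          X 0 * X 3 + X 2 * X 4 ^ 2 + X 1 * X 5,
          X 1 * X 3 + X 0 * X 4 + X 3 * X 5,
          X 1 * X 4 + X 2 * X 5 } : Ideal (MvPolynomial (Fin 6) K)).radical := by
  classical
  set Iid : Ideal (MvPolynomial (Fin 6) K) := Ideal.span {X 0 * X 2, X 0 * X 3, X 0 * X 4, X 1 * X 3, X 1 * X 4, X 1 * X 5,
        X 2 * X 4, X 2 * X 5, X 3 * X 5} with hI
  set Jid : Ideal (MvPolynomial (Fin 6) K) :=
    Ideal.span
      { X 0 ^ 2 * X 2 - X 0 * X 1 * X 3 - X 1 * X 2 ^ 2 * X 4,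
          X 0 * X 3 + X 2 * X 4 ^ 2 + X 1 * X 5,
          X 1 * X 3 + X 0 * X 4 + X 3 * X 5,
          X 1 * X 4 + X 2 * X 5 } with hJ
  -- generators of Jid lie in its radical
  have hD : (X 0 ^ 2 * X 2 - X 0 * X 1 * X 3 - X 1 * X 2 ^ 2 * X 4 : MvPolynomial (Fin 6) K) ∈
      Jid.radical := Ideal.le_radical (hJ ▸ Ideal.subset_span (by simp))
  have hq1 : (X 0 * X 3 + X 2 * X 4 ^ 2 + X 1 * X 5 : MvPolynomial (Fin 6) K) ∈ Jid.radical :=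
    Ideal.le_radical (hJ ▸ Ideal.subset_span (by simp))
  have hq2 : (X 1 * X 3 + X 0 * X 4 + X 3 * X 5 : MvPolynomial (Fin 6) K) ∈ Jid.radical :=
    Ideal.le_radical (hJ ▸ Ideal.subset_span (by simp))
  have hq3 : (X 1 * X 4 + X 2 * X 5 : MvPolynomial (Fin 6) K) ∈ Jid.radical :=
    Ideal.le_radical (hJ ▸ Ideal.subset_span (by simp))
  have h14 : (X 1 * X 4 : MvPolynomial (Fin 6) K) ∈ Jid.radical := by
    apply Ideal.mem_radical_of_pow_mem (m := 3)
    have hid : ((X 1 * X 4 : MvPolynomial (Fin 6) K))^3 =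
        (-X 4^3) * (X 0 ^ 2 * X 2 - X 0 * X 1 * X 3 - X 1 * X 2 ^ 2 * X 4) +
        (-X 2*X 4^2*X 5 - (1)*X 1*X 4^3 - (1)*X 1*X 2*X 4^2) * (X 0 * X 3 + X 2 * X 4 ^ 2 + X 1 * X 5) +
        (X 0*X 2*X 4^2) * (X 1 * X 3 + X 0 * X 4 + X 3 * X 5) +
        (X 2*X 4^4 + X 1*X 4^2*X 5 + X 1^2*X 4^2) * (X 1 * X 4 + X 2 * X 5) := by ring
    rw [hid]
    exact (Ideal.add_mem _ (Ideal.add_mem _ (Ideal.add_mem _ (Ideal.mul_mem_left _ _ hD) (Ideal.mul_mem_left _ _ hq1)) (Ideal.mul_mem_left _ _ hq2)) (Ideal.mul_mem_left _ _ hq3))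

  have h25 : (X 2 * X 5 : MvPolynomial (Fin 6) K) ∈ Jid.radical := by
    apply Ideal.mem_radical_of_pow_mem (m := 3)
    have hid : ((X 2 * X 5 : MvPolynomial (Fin 6) K))^3 =
        (X 4^3) * (X 0 ^ 2 * X 2 - X 0 * X 1 * X 3 - X 1 * X 2 ^ 2 * X 4) +
        (X 1*X 2*X 4^2) * (X 0 * X 3 + X 2 * X 4 ^ 2 + X 1 * X 5) +
        (X 2*X 3*X 4*X 5 + X 1*X 3*X 4^2 - (1)*X 0*X 2*X 4^2) * (X 1 * X 3 + X 0 * X 4 + X 3 * X 5) +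
        (-X 3^2*X 4*X 5 + X 2^2*X 5^2 - (1)*X 1*X 3^2*X 4 - (1)*X 1*X 2*X 4*X 5) * (X 1 * X 4 + X 2 * X 5) := by ring
    rw [hid]
    exact (Ideal.add_mem _ (Ideal.add_mem _ (Ideal.add_mem _ (Ideal.mul_mem_left _ _ hD) (Ideal.mul_mem_left _ _ hq1)) (Ideal.mul_mem_left _ _ hq2)) (Ideal.mul_mem_left _ _ hq3))

  have h15 : (X 1 * X 5 : MvPolynomial (Fin 6) K) ∈ Jid.radical := by
    apply Ideal.mem_radical_of_pow_mem (m := 3)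
    have hid : ((X 1 * X 5 : MvPolynomial (Fin 6) K))^3 =
        (-X 5^3) * (X 0 ^ 2 * X 2 - X 0 * X 1 * X 3 - X 1 * X 2 ^ 2 * X 4) +
        (-X 2*X 4^2*X 5^2 - (1)*X 1*X 4^3*X 5 + X 1^2*X 5^2) * (X 0 * X 3 + X 2 * X 4 ^ 2 + X 1 * X 5) +
        (X 2*X 3*X 4*X 5^2 + X 1*X 3*X 4^2*X 5 - (1)*X 0*X 1*X 5^2) * (X 1 * X 3 + X 0 * X 4 + X 3 * X 5) +
        (-X 3^2*X 4*X 5^2 + X 2*X 4^4*X 5 + X 1*X 4^2*X 5^2 - (1)*X 1*X 3^2*X 4*X 5 - (1)*X 1*X 2*X 4*X 5^2 + X 0^2*X 5^2) * (X 1 * X 4 + X 2 * X 5) := by ring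
    rw [hid]
    exact (Ideal.add_mem _ (Ideal.add_mem _ (Ideal.add_mem _ (Ideal.mul_mem_left _ _ hD) (Ideal.mul_mem_left _ _ hq1)) (Ideal.mul_mem_left _ _ hq2)) (Ideal.mul_mem_left _ _ hq3))

  have h13 : (X 1 * X 3 : MvPolynomial (Fin 6) K) ∈ Jid.radical := by
    apply Ideal.mem_radical_of_pow_mem (m := 2)
    have hid : ((X 1 * X 3 : MvPolynomial (Fin 6) K))^2 =
        (-X 1*X 4) * (X 0 * X 3 + X 2 * X 4 ^ 2 + X 1 * X 5) +
        (X 1*X 3) * (X 1 * X 3 + X 0 * X 4 + X 3 * X 5) +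
        (X 2*X 4^2) * (X 1 * X 4 + X 2 * X 5) +
        (-X 2*X 4^2) * (X 2 * X 5) +
        (-X 3^2 + X 1*X 4) * (X 1 * X 5) := by ring
    rw [hid]
    exact (Ideal.add_mem _ (Ideal.add_mem _ (Ideal.add_mem _ (Ideal.add_mem _ (Ideal.mul_mem_left _ _ hq1) (Ideal.mul_mem_left _ _ hq2)) (Ideal.mul_mem_left _ _ hq3)) (Ideal.mul_mem_left _ _ h25)) (Ideal.mul_mem_left _ _ h15))

  have h02 : (X 0 * X 2 : MvPolynomial (Fin 6) K) ∈ Jid.radical := by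
    apply Ideal.mem_radical_of_pow_mem (m := 2)
    have hid : ((X 0 * X 2 : MvPolynomial (Fin 6) K))^2 =
        (-X 4 + X 2) * (X 0 ^ 2 * X 2 - X 0 * X 1 * X 3 - X 1 * X 2 ^ 2 * X 4) +
        (-X 1*X 4) * (X 0 * X 3 + X 2 * X 4 ^ 2 + X 1 * X 5) +
        (X 0*X 2) * (X 1 * X 3 + X 0 * X 4 + X 3 * X 5) +
        (X 2*X 4^2) * (X 1 * X 4 + X 2 * X 5) +
        (-X 2^2*X 4 + X 2^3) * (X 1 * X 4) +
        (-X 2*X 4^2 - (1)*X 0*X 3) * (X 2 * X 5) +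
        (X 1*X 4) * (X 1 * X 5) := by ring
    rw [hid]
    exact (Ideal.add_mem _ (Ideal.add_mem _ (Ideal.add_mem _ (Ideal.add_mem _ (Ideal.add_mem _ (Ideal.add_mem _ (Ideal.mul_mem_left _ _ hD) (Ideal.mul_mem_left _ _ hq1)) (Ideal.mul_mem_left _ _ hq2)) (Ideal.mul_mem_left _ _ hq3)) (Ideal.mul_mem_left _ _ h14)) (Ideal.mul_mem_left _ _ h25)) (Ideal.mul_mem_left _ _ h15))

  have h03 : (X 0 * X 3 : MvPolynomial (Fin 6) K) ∈ Jid.radical := by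
    apply Ideal.mem_radical_of_pow_mem (m := 2)
    have hid : ((X 0 * X 3 : MvPolynomial (Fin 6) K))^2 =
        (X 0*X 3) * (X 0 * X 3 + X 2 * X 4 ^ 2 + X 1 * X 5) +
        (-X 0*X 3) * (X 1 * X 5) +
        (-X 3*X 4^2) * (X 0 * X 2) := by ring
    rw [hid]
    exact (Ideal.add_mem _ (Ideal.add_mem _ (Ideal.mul_mem_left _ _ hq1) (Ideal.mul_mem_left _ _ h15)) (Ideal.mul_mem_left _ _ h02))

  have h24 : (X 2 * X 4 : MvPolynomial (Fin 6) K) ∈ Jid.radical := by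
    apply Ideal.mem_radical_of_pow_mem (m := 2)
    have hid : ((X 2 * X 4 : MvPolynomial (Fin 6) K))^2 =
        (X 2) * (X 0 * X 3 + X 2 * X 4 ^ 2 + X 1 * X 5) +
        (-X 1) * (X 2 * X 5) +
        (-X 3) * (X 0 * X 2) := by ring
    rw [hid]
    exact (Ideal.add_mem _ (Ideal.add_mem _ (Ideal.mul_mem_left _ _ hq1) (Ideal.mul_mem_left _ _ h25)) (Ideal.mul_mem_left _ _ h02))

  have h35 : (X 3 * X 5 : MvPolynomial (Fin 6) K) ∈ Jid.radical := by
    apply Ideal.mem_radical_of_pow_mem (m := 2)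
    have hid : ((X 3 * X 5 : MvPolynomial (Fin 6) K))^2 =
        (-X 4*X 5) * (X 0 * X 3 + X 2 * X 4 ^ 2 + X 1 * X 5) +
        (X 3*X 5) * (X 1 * X 3 + X 0 * X 4 + X 3 * X 5) +
        (X 4^3) * (X 2 * X 5) +
        (X 4*X 5 - (1)*X 3^2) * (X 1 * X 5) := by ring
    rw [hid]
    exact (Ideal.add_mem _ (Ideal.add_mem _ (Ideal.add_mem _ (Ideal.mul_mem_left _ _ hq1) (Ideal.mul_mem_left _ _ hq2)) (Ideal.mul_mem_left _ _ h25)) (Ideal.mul_mem_left _ _ h15))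

  have h04 : (X 0 * X 4 : MvPolynomial (Fin 6) K) ∈ Jid.radical := by
    apply Ideal.mem_radical_of_pow_mem (m := 2)
    have hid : ((X 0 * X 4 : MvPolynomial (Fin 6) K))^2 =
        (X 4) * (X 0 ^ 2 * X 2 - X 0 * X 1 * X 3 - X 1 * X 2 ^ 2 * X 4) +
        (-X 4*X 5) * (X 0 * X 3 + X 2 * X 4 ^ 2 + X 1 * X 5) +
        (X 0*X 4) * (X 1 * X 3 + X 0 * X 4 + X 3 * X 5) +
        (X 2^2*X 4) * (X 1 * X 4) +
        (X 4^3) * (X 2 * X 5) +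
        (X 4*X 5) * (X 1 * X 5) +
        (-X 0*X 4) * (X 0 * X 2) := by ring
    rw [hid]
    exact (Ideal.add_mem _ (Ideal.add_mem _ (Ideal.add_mem _ (Ideal.add_mem _ (Ideal.add_mem _ (Ideal.add_mem _ (Ideal.mul_mem_left _ _ hD) (Ideal.mul_mem_left _ _ hq1)) (Ideal.mul_mem_left _ _ hq2)) (Ideal.mul_mem_left _ _ h14)) (Ideal.mul_mem_left _ _ h25)) (Ideal.mul_mem_left _ _ h15)) (Ideal.mul_mem_left _ _ h02))

  -- I ≤ radical J
  have hIJ : Iid ≤ Jid.radical := by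
    rw [hI, Ideal.span_le]
    rintro p hp
    simp only [Set.mem_insert_iff, Set.mem_singleton_iff] at hp
    rcases hp with rfl|rfl|rfl|rfl|rfl|rfl|rfl|rfl|rfl
    exacts [h02, h03, h04, h13, h14, h15, h24, h25, h35]
  -- J ≤ I
  have hJI : Jid ≤ Iid := by
    rw [hJ, Ideal.span_le]
    rintro p hp
    simp only [Set.mem_insert_iff, Set.mem_singleton_iff] at hp
    have g02 : (X 0 * X 2 : MvPolynomial (Fin 6) K) ∈ Iid := hI ▸ Ideal.subset_span (by simp)
    have g03 : (X 0 * X 3 : MvPolynomial (Fin 6) K) ∈ Iid := hI ▸ Ideal.subset_span (by simp)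
    have g04 : (X 0 * X 4 : MvPolynomial (Fin 6) K) ∈ Iid := hI ▸ Ideal.subset_span (by simp)
    have g13 : (X 1 * X 3 : MvPolynomial (Fin 6) K) ∈ Iid := hI ▸ Ideal.subset_span (by simp)
    have g14 : (X 1 * X 4 : MvPolynomial (Fin 6) K) ∈ Iid := hI ▸ Ideal.subset_span (by simp)
    have g15 : (X 1 * X 5 : MvPolynomial (Fin 6) K) ∈ Iid := hI ▸ Ideal.subset_span (by simp)
    have g24 : (X 2 * X 4 : MvPolynomial (Fin 6) K) ∈ Iid := hI ▸ Ideal.subset_span (by simp)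
    have g25 : (X 2 * X 5 : MvPolynomial (Fin 6) K) ∈ Iid := hI ▸ Ideal.subset_span (by simp)
    have g35 : (X 3 * X 5 : MvPolynomial (Fin 6) K) ∈ Iid := hI ▸ Ideal.subset_span (by simp)
    rcases hp with rfl|rfl|rfl|rfl
    · have : (X 0 ^ 2 * X 2 - X 0 * X 1 * X 3 - X 1 * X 2 ^ 2 * X 4 : MvPolynomial (Fin 6) K) =
          X 0 * (X 0 * X 2) - X 1 * (X 0 * X 3) - (X 1 * X 2) * (X 2 * X 4) := by ring
      rw [this]
      exact Ideal.sub_mem _ (Ideal.sub_mem _ (Ideal.mul_mem_left _ _ g02)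
        (Ideal.mul_mem_left _ _ g03)) (Ideal.mul_mem_left _ _ g24)
    · have : (X 0 * X 3 + X 2 * X 4 ^ 2 + X 1 * X 5 : MvPolynomial (Fin 6) K) =
          X 0 * X 3 + X 4 * (X 2 * X 4) + X 1 * X 5 := by ring
      rw [this]
      exact Ideal.add_mem _ (Ideal.add_mem _ g03 (Ideal.mul_mem_left _ _ g24)) g15
    · exact Ideal.add_mem _ (Ideal.add_mem _ g13 g04) g35
    · exact Ideal.add_mem _ g14 g25
  -- radical I ≤ I
  have hIrad : Iid.radical ≤ Iid := by
    rw [hI, ← vanishingIdeal_zeroLocus_eq_radical (K := K)]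
    intro f hf
    have hcov : ∀ j : Fin 6, ∀ m ∈ f.support,
        ∃ i ∈ ({j, j + 1} : Finset (Fin 6))ᶜ, (m : Fin 6 →₀ ℕ) i ≠ 0 := by
      intro j
      apply C6_mask
      intro y hy
      apply hf
      rw [mem_zeroLocus_iff]
      intro p hp
      have key : ∀ a b : Fin 6,
          (∀ j' : Fin 6, a ∈ ({j', j' + 1} : Finset (Fin 6))ᶜ ∨
            b ∈ ({j', j' + 1} : Finset (Fin 6))ᶜ) →
          (X a * X b : MvPolynomial (Fin 6) K) ∈ vanishingIdeal K ({y} : Set (Fin 6 → K)) := by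
        intro a b hab
        rw [mem_vanishingIdeal_iff]
        intro x hx
        rw [Set.mem_singleton_iff] at hx
        subst hx
        rw [map_mul, aeval_X, aeval_X]
        rcases hab j with h | h
        · rw [hy a h, zero_mul]
        · rw [hy b h, mul_zero]
      have hspan : Ideal.span {X 0 * X 2, X 0 * X 3, X 0 * X 4, X 1 * X 3, X 1 * X 4, X 1 * X 5,
        X 2 * X 4, X 2 * X 5, X 3 * X 5} ≤
          vanishingIdeal K ({y} : Set (Fin 6 → K)) := by
        rw [Ideal.span_le]
        rintro q hq
        simp only [Set.mem_insert_iff, Set.mem_singleton_iff] at hq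
        rcases hq with rfl|rfl|rfl|rfl|rfl|rfl|rfl|rfl|rfl
        · exact key 0 2 (by decide)
        · exact key 0 3 (by decide)
        · exact key 0 4 (by decide)
        · exact key 1 3 (by decide)
        · exact key 1 4 (by decide)
        · exact key 1 5 (by decide)
        · exact key 2 4 (by decide)
        · exact key 2 5 (by decide)
        · exact key 3 5 (by decide)
      exact mem_vanishingIdeal_iff.mp (hspan hp) y rfl
    rw [f.as_sum]
    apply Ideal.sum_mem
    intro m hm
    have hmem : ∀ a b : Fin 6, a ≠ b → (m : Fin 6 →₀ ℕ) a ≠ 0 → (m : Fin 6 →₀ ℕ) b ≠ 0 →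
        (X a * X b : MvPolynomial (Fin 6) K) ∈ Ideal.span {X 0 * X 2, X 0 * X 3, X 0 * X 4, X 1 * X 3, X 1 * X 4, X 1 * X 5,
        X 2 * X 4, X 2 * X 5, X 3 * X 5} →
        monomial m (coeff m f) ∈ Ideal.span {X 0 * X 2, X 0 * X 3, X 0 * X 4, X 1 * X 3, X 1 * X 4, X 1 * X 5,
        X 2 * X 4, X 2 * X 5, X 3 * X 5} := by
      intro a b hab ha hb hX
      exact C6_mono_mem _ a b hab hX m ha hb _
    set s : Fin 6 → Bool := fun i => decide ((m : Fin 6 →₀ ℕ) i ≠ 0) with hs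
    have hcomb := C6_comb s (by
      intro j
      obtain ⟨i, hiC, hi⟩ := hcov j m hm
      exact ⟨i, hiC, by simp [hs, hi]⟩)
    simp only [hs, decide_eq_true_eq] at hcomb
    rcases hcomb with ⟨h1, h2⟩|⟨h1, h2⟩|⟨h1, h2⟩|⟨h1, h2⟩|⟨h1, h2⟩|⟨h1, h2⟩|⟨h1, h2⟩|⟨h1, h2⟩|⟨h1, h2⟩
    · exact hmem 0 2 (by decide) h1 h2 (Ideal.subset_span (by simp))
    · exact hmem 0 3 (by decide) h1 h2 (Ideal.subset_span (by simp))
    · exact hmem 0 4 (by decide) h1 h2 (Ideal.subset_span (by simp))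
    · exact hmem 1 3 (by decide) h1 h2 (Ideal.subset_span (by simp))
    · exact hmem 1 4 (by decide) h1 h2 (Ideal.subset_span (by simp))
    · exact hmem 1 5 (by decide) h1 h2 (Ideal.subset_span (by simp))
    · exact hmem 2 4 (by decide) h1 h2 (Ideal.subset_span (by simp))
    · exact hmem 2 5 (by decide) h1 h2 (Ideal.subset_span (by simp))
    · exact hmem 3 5 (by decide) h1 h2 (Ideal.subset_span (by simp))
  have hIeq : Iid.radical = Iid := le_antisymm hIrad Ideal.le_radical
  refine ⟨hIeq, le_antisymm hIJ ?_⟩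
  calc Jid.radical ≤ Iid.radical := Ideal.radical_mono hJI
    _ = Iid := hIeq
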